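/- arXiv:1312.6899 — 2 statements merged into one kernel-verified Lean document; each statement's English description precedes it below -/
import Mathlib

section
/- Assume φ_i≥0 for all i≥1, φ_n>0 for all sufficiently large n, and for each integer j≥0 the limit lim_{n→∞} φ_{j+n}/φ_n exists in [0,∞). Then, with ε_n=t_n−∑_{i=1}^{n} φ_i t_{n−i}∈ℝ[q]: (i) [q^0]ε_n = 1 if n=0 and 0 otherwise; (ii) for every integer j≥0 there exists c_j≥0 such that lim_{n→∞} [q^j]ε_n/φ_{n−j} = c_j; (iii) for every integer j≥0 there exists c̃_j≥0 such that for all n≥1, 0 ≤ [q^j]ε_n ≤ c̃_j·∑_{i=n−j}^{n−1} φ_i. -/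
/-!
Write `ε_n = ∑_{i=1}^n φ_i E_{i,n-i}`, where `E_{i,s}` (`excess t i s`) is the inner sum of the
recursion with the tuple `(s,0,…,0)` removed; that tuple has `L = 0` and contributes exactly `t_s`.
Every other tuple has `L ≥ s`, and always `L ≥ ∑ j n_j`. Hence `[q^j]E_{i,s}` vanishes unless
`1 ≤ s ≤ j`, and it does not depend on `i ≥ j`, because a tuple with `L ≤ j` has no nonzero entry
beyond position `j`. So `[q^j]ε_n = ∑_{s=1}^j a_s φ_{n-s}` for `n > 2j`, with constants
`a_s = [q^j]E_{j,s} ≥ 0` (all coefficients of the `t_n` are nonnegative by induction). Dividing by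
`φ_{n-j}` gives (ii) from the ratio limits, and the uniform bound on the finitely many values
`[q^j]E_{i,s}` gives (iii).
-/

open Filter Finset Polynomial

noncomputable section

/-- `L_i(n_1,…,n_i) = C(n,2) − ∑ C(n_j,2) + ∑ (j−1) n_j` where `n = n_1 + ⋯ + n_i`
(0-indexed tuples, so the weight of the `j`-th entry is `j`).  The value is always
nonnegative, so natural subtraction is exact. -/
def Ldeg (i : ℕ) (ns : Fin i → ℕ) : ℕ :=
  (Nat.choose (∑ j : Fin i, ns j) 2 + ∑ j : Fin i, (j : ℕ) * ns j) - ∑ j : Fin i, Nat.choose (ns j) 2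

/-- The sequence of polynomials `t_n ∈ ℝ[q]`: `t_0 = 1` and for `n ≥ 1`,
`t_n = ∑_{i=1}^n φ_i ∑_{n_1+⋯+n_{i+1} = n-i} t_{n_1} ⋯ t_{n_{i+1}} q^{L_{i+1}(n_1,…,n_{i+1})}`. -/
def IsTSeq (φ : ℕ → ℝ) (t : ℕ → Polynomial ℝ) : Prop :=
  t 0 = 1 ∧ ∀ n, 1 ≤ n →
    t n = ∑ i ∈ Finset.Icc 1 n, Polynomial.C (φ i) *
      ∑ ns ∈ Finset.Nat.antidiagonalTuple (i + 1) (n - i),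
        (∏ j, t (ns j)) * Polynomial.X ^ Ldeg (i + 1) ns

theorem Nat.choose_two_add (m r : ℕ) :
    (m + r).choose 2 = m.choose 2 + r.choose 2 + m * r := by
  rw [Nat.add_choose_eq]
  simp [Finset.Nat.antidiagonal_succ]
  ring

theorem Finset.sum_choose_two_le {ι : Type*} (s : Finset ι) (f : ι → ℕ) :
    ∑ k ∈ s, (f k).choose 2 ≤ (∑ k ∈ s, f k).choose 2 := by
  induction s using Finset.cons_induction with
  | empty => simp
  | cons a s ha ih =>
    rw [sum_cons, sum_cons, Nat.choose_two_add]
    omega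

theorem weight_le_Ldeg (i : ℕ) (ns : Fin i → ℕ) : ∑ k : Fin i, (k : ℕ) * ns k ≤ Ldeg i ns := by
  have := Finset.sum_choose_two_le univ ns
  unfold Ldeg
  omega

theorem Ldeg_zero (i : ℕ) : Ldeg i 0 = 0 := by
  simp [Ldeg]

theorem Ldeg_cons (i a : ℕ) (r : Fin i → ℕ) :
    Ldeg (i + 1) (Fin.cons a r) = a * ∑ k, r k + ∑ k, r k + Ldeg i r := by
  have := Finset.sum_choose_two_le univ r
  simp only [Ldeg, Fin.sum_univ_succ, Fin.cons_zero, Fin.cons_succ, Fin.val_zero,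
    Fin.val_succ, Nat.choose_two_add, add_mul, one_mul, Finset.sum_add_distrib]
  omega

theorem Ldeg_snoc_zero (i : ℕ) (r : Fin i → ℕ) : Ldeg (i + 1) (Fin.snoc r 0) = Ldeg i r := by
  simp [Ldeg, Fin.sum_univ_castSucc]

theorem le_Ldeg_of_ne_cons_zero {i s : ℕ} {ns : Fin (i + 1) → ℕ}
    (hns : ns ∈ Finset.Nat.antidiagonalTuple (i + 1) s) (hne : ns ≠ Fin.cons s 0) :
    s ≤ Ldeg (i + 1) ns := by
  obtain ⟨a, r, rfl⟩ : ∃ a r, ns = Fin.cons a r := ⟨ns 0, Fin.tail ns, (Fin.cons_self_tail ns).symm⟩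
  rw [Finset.Nat.mem_antidiagonalTuple, Fin.sum_cons] at hns
  have hr : 1 ≤ ∑ k, r k := by
    by_contra! h
    have hr0 : r = 0 := funext fun k => sum_eq_zero_iff.mp (by omega) k (mem_univ k)
    exact hne (by rw [hr0, show a = s by simp_all])
  rw [Ldeg_cons]
  nlinarith

theorem eq_snoc_init_zero_of_Ldeg_lt {n : ℕ} {ns : Fin (n + 1) → ℕ}
    (h : Ldeg (n + 1) ns < n) : ns = Fin.snoc (Fin.init ns) 0 := by
  have hlast : n * ns (Fin.last n) ≤ Ldeg (n + 1) ns :=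
    (single_le_sum (f := fun k : Fin (n + 1) => (k : ℕ) * ns k) (fun _ _ => Nat.zero_le _)
      (mem_univ (Fin.last n))).trans (weight_le_Ldeg _ ns)
  have : ns (Fin.last n) = 0 := by nlinarith
  conv_lhs => rw [← Fin.snoc_init_self ns, this]

section TupleSum

variable {R : Type*} [CommSemiring R] {t : ℕ → R[X]}

def tupleSum (t : ℕ → R[X]) (i s : ℕ) : R[X] :=
  ∑ ns ∈ Finset.Nat.antidiagonalTuple (i + 1) s, (∏ k, t (ns k)) * X ^ Ldeg (i + 1) ns

/-- A tuple whose last entry is nonzero has `L ≥ i + 1 > j` (the last entry has weight `i + 1`),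
so only tuples ending in `0` contribute to the coefficient of `q ^ j`. -/
theorem coeff_tupleSum_succ (ht0 : t 0 = 1) {i j : ℕ} (hji : j ≤ i) (s : ℕ) :
    (tupleSum t (i + 1) s).coeff j = (tupleSum t i s).coeff j := by
  have hprod (r : Fin (i + 1) → ℕ) : ∏ k, t (Fin.snoc (α := fun _ => ℕ) r 0 k) = ∏ k, t (r k) := by
    simp [Fin.prod_univ_castSucc, ht0]
  simp only [tupleSum, finsetSum_coeff, coeff_mul_X_pow']
  symm
  refine sum_bij_ne_zero (fun ns _ _ => Fin.snoc ns 0) ?_ ?_ ?_ ?_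
  · intro ns hns _
    simpa [Finset.Nat.mem_antidiagonalTuple, Fin.sum_snoc] using hns
  · intro a _ _ b _ _ hab
    exact (Fin.snoc_injective2 hab).1
  · intro ns hns hne
    have hL : Ldeg (i + 1 + 1) ns < i + 1 := by
      by_contra h
      exact hne (if_neg (by omega))
    have hns' := eq_snoc_init_zero_of_Ldeg_lt hL
    refine ⟨Fin.init ns, ?_, ?_, hns'.symm⟩
    · rw [Finset.Nat.mem_antidiagonalTuple] at hns ⊢
      rwa [hns', Fin.sum_snoc, add_zero] at hns
    · rwa [hns', Ldeg_snoc_zero, hprod] at hne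
  · intro ns _ _
    rw [Ldeg_snoc_zero, hprod]

theorem coeff_tupleSum_of_le (ht0 : t 0 = 1) {i j : ℕ} (hji : j ≤ i) (s : ℕ) :
    (tupleSum t i s).coeff j = (tupleSum t j s).coeff j := by
  induction i, hji using Nat.le_induction with
  | base => rfl
  | succ i hji ih => rw [coeff_tupleSum_succ ht0 hji, ih]

theorem tupleSum_mem {S : Subsemiring R[X]} (hX : X ∈ S) {s : ℕ} (ht : ∀ m ≤ s, t m ∈ S)
    (i : ℕ) : tupleSum t i s ∈ S := by
  refine sum_mem fun ns hns => mul_mem (prod_mem fun k _ => ht _ ?_) (pow_mem hX _)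
  rw [Finset.Nat.mem_antidiagonalTuple] at hns
  exact hns ▸ single_le_sum (fun _ _ => Nat.zero_le _) (mem_univ k)

theorem tupleSum_eq_add_sum_erase (ht0 : t 0 = 1) (i s : ℕ) :
    tupleSum t i s = t s + ∑ ns ∈ (Finset.Nat.antidiagonalTuple (i + 1) s).erase (Fin.cons s 0),
      (∏ k, t (ns k)) * X ^ Ldeg (i + 1) ns := by
  have hmem : (Fin.cons s 0 : Fin (i + 1) → ℕ) ∈ Finset.Nat.antidiagonalTuple (i + 1) s := by
    simp [Finset.Nat.mem_antidiagonalTuple, Fin.sum_cons]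
  rw [tupleSum, ← add_sum_erase _ _ hmem, Ldeg_cons, Ldeg_zero]
  simp [Fin.prod_univ_succ, ht0]

end TupleSum

section Excess

variable {R : Type*} [CommRing R] {t : ℕ → R[X]}

def excess (t : ℕ → R[X]) (i s : ℕ) : R[X] := tupleSum t i s - t s

theorem excess_eq_sum_erase (ht0 : t 0 = 1) (i s : ℕ) :
    excess t i s = ∑ ns ∈ (Finset.Nat.antidiagonalTuple (i + 1) s).erase (Fin.cons s 0),
      (∏ k, t (ns k)) * X ^ Ldeg (i + 1) ns := by
  rw [excess, tupleSum_eq_add_sum_erase ht0, add_sub_cancel_left]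

theorem excess_zero_right (ht0 : t 0 = 1) (i : ℕ) : excess t i 0 = 0 := by
  simp [excess, tupleSum, Finset.Nat.antidiagonalTuple_zero_right, Ldeg_zero, ht0]

theorem coeff_excess_eq_zero_of_lt (ht0 : t 0 = 1) {j s : ℕ} (hjs : j < s) (i : ℕ) :
    (excess t i s).coeff j = 0 := by
  rw [excess_eq_sum_erase ht0, finsetSum_coeff]
  refine sum_eq_zero fun ns hns => ?_
  obtain ⟨hne, hns⟩ := mem_erase.mp hns
  rw [coeff_mul_X_pow', if_neg (by have := le_Ldeg_of_ne_cons_zero hns hne; omega)]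

theorem coeff_excess_of_le (ht0 : t 0 = 1) {i j : ℕ} (hji : j ≤ i) (s : ℕ) :
    (excess t i s).coeff j = (excess t j s).coeff j := by
  simp only [excess, coeff_sub, coeff_tupleSum_of_le ht0 hji]

end Excess

def nonnegCoeffs (R : Type*) [CommSemiring R] [PartialOrder R] [IsOrderedRing R] :
    Subsemiring R[X] where
  carrier := {p | ∀ k, 0 ≤ p.coeff k}
  mul_mem' hp hq k := by
    rw [coeff_mul]
    exact sum_nonneg fun x _ => mul_nonneg (hp _) (hq _)
  one_mem' k := by
    rw [coeff_one]
    split_ifs <;> simp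
  add_mem' hp hq k := by
    rw [coeff_add]
    exact add_nonneg (hp k) (hq k)
  zero_mem' k := by simp

section NonnegCoeffs

variable {R : Type*} [CommSemiring R] [PartialOrder R] [IsOrderedRing R]

theorem X_mem_nonnegCoeffs : (X : R[X]) ∈ nonnegCoeffs R := fun k => by
  rw [coeff_X]
  split_ifs <;> simp

theorem C_mem_nonnegCoeffs {a : R} (ha : 0 ≤ a) : C a ∈ nonnegCoeffs R := fun k => by
  rw [coeff_C]
  split_ifs <;> simp [ha]

end NonnegCoeffs

def eps (φ : ℕ → ℝ) (t : ℕ → ℝ[X]) (n : ℕ) : ℝ[X] :=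
  t n - ∑ i ∈ Icc 1 n, C (φ i) * t (n - i)

namespace IsTSeq

variable {φ : ℕ → ℝ} {t : ℕ → ℝ[X]}

theorem eps_eq_sum_excess (ht : IsTSeq φ t) {n : ℕ} (hn : 1 ≤ n) :
    eps φ t n = ∑ i ∈ Icc 1 n, C (φ i) * excess t i (n - i) := by
  simp only [eps, excess, mul_sub, sum_sub_distrib]
  rw [ht.2 n hn]
  rfl

theorem mem_nonnegCoeffs (ht : IsTSeq φ t) (hφ : ∀ i, 1 ≤ i → 0 ≤ φ i) (n : ℕ) :
    t n ∈ nonnegCoeffs ℝ := by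
  induction n using Nat.strong_induction_on with
  | _ n ih =>
    rcases Nat.eq_zero_or_pos n with rfl | hn
    · rw [ht.1]
      exact one_mem _
    · rw [ht.2 n hn]
      refine sum_mem fun i hi => mul_mem (C_mem_nonnegCoeffs (hφ i (mem_Icc.mp hi).1)) ?_
      exact tupleSum_mem X_mem_nonnegCoeffs
        (fun m hm => ih m (by have := (mem_Icc.mp hi).1; omega)) i

theorem excess_mem_nonnegCoeffs (ht : IsTSeq φ t) (hφ : ∀ i, 1 ≤ i → 0 ≤ φ i) (i s : ℕ) :
    excess t i s ∈ nonnegCoeffs ℝ := by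
  rw [excess_eq_sum_erase ht.1]
  exact sum_mem fun ns _ =>
    mul_mem (prod_mem fun k _ => ht.mem_nonnegCoeffs hφ _) (pow_mem X_mem_nonnegCoeffs _)

theorem coeff_excess_le_sum (ht : IsTSeq φ t) (hφ : ∀ i, 1 ≤ i → 0 ≤ φ i) (i s j : ℕ) :
    (excess t i s).coeff j ≤
      ∑ p ∈ range (j + 1) ×ˢ range (j + 1), (excess t p.1 p.2).coeff j := by
  have hnonneg (p : ℕ × ℕ) (_ : p ∈ range (j + 1) ×ˢ range (j + 1)) :
      0 ≤ (excess t p.1 p.2).coeff j :=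
    ht.excess_mem_nonnegCoeffs hφ p.1 p.2 j
  rcases lt_or_ge j s with hjs | hsj
  · rw [coeff_excess_eq_zero_of_lt ht.1 hjs]
    exact sum_nonneg hnonneg
  · have hmin : (excess t i s).coeff j = (excess t (min i j) s).coeff j := by
      rcases le_total i j with hij | hji
      · rw [min_eq_left hij]
      · rw [min_eq_right hji, coeff_excess_of_le ht.1 hji]
    have hmem : (min i j, s) ∈ range (j + 1) ×ˢ range (j + 1) :=
      mem_product.mpr ⟨mem_range.mpr (by omega), mem_range.mpr (by omega)⟩
    have hle := single_le_sum hnonneg hmem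
    rw [hmin]
    exact hle

theorem coeff_eps_eq_sum (ht : IsTSeq φ t) (hφ0 : φ 0 = 0) {n : ℕ} (hn : 1 ≤ n) (j : ℕ) :
    (eps φ t n).coeff j = ∑ i ∈ Icc (n - j) (n - 1), φ i * (excess t i (n - i)).coeff j := by
  set g := fun i => φ i * (excess t i (n - i)).coeff j
  have hsub_Icc_one : ∑ i ∈ Icc 1 n, g i = ∑ i ∈ Icc 0 n, g i :=
    sum_subset (Icc_subset_Icc_left (Nat.zero_le 1)) fun i hi hi' => by
      obtain rfl : i = 0 := by simp_all
      simp [g, hφ0]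
  have hsub_Icc_sub : ∑ i ∈ Icc (n - j) (n - 1), g i = ∑ i ∈ Icc 0 n, g i := by
    refine sum_subset (Icc_subset_Icc (Nat.zero_le _) (Nat.sub_le n 1)) fun i hi hi' => ?_
    rw [mem_Icc] at hi hi'
    rcases lt_or_ge i (n - j) with hlt | hge
    · simp [g, coeff_excess_eq_zero_of_lt ht.1 (by omega : j < n - i)]
    · obtain rfl : i = n := by omega
      simp [g, excess_zero_right ht.1]
  rw [ht.eps_eq_sum_excess hn, finsetSum_coeff, hsub_Icc_sub, ← hsub_Icc_one]
  simp only [coeff_C_mul, g]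

theorem coeff_eps_eq_sum_of_lt (ht : IsTSeq φ t) (hφ0 : φ 0 = 0) {n j : ℕ} (hjn : 2 * j < n) :
    (eps φ t n).coeff j = ∑ s ∈ Icc 1 j, (excess t j s).coeff j * φ (n - s) := by
  rw [ht.coeff_eps_eq_sum hφ0 (by omega)]
  refine sum_nbij' (fun i => n - i) (fun s => n - s) ?_ ?_ ?_ ?_ ?_ <;>
    intro i hi <;> simp only [mem_Icc] at hi ⊢
  · omega
  · omega
  · omega
  · omega
  · rw [Nat.sub_sub_self (by omega), coeff_excess_of_le ht.1 (by omega), mul_comm]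

theorem coeff_zero_eps (ht : IsTSeq φ t) (hφ0 : φ 0 = 0) (n : ℕ) :
    (eps φ t n).coeff 0 = if n = 0 then 1 else 0 := by
  rcases Nat.eq_zero_or_pos n with rfl | hn
  · simp [eps, ht.1]
  · rw [if_neg hn.ne', ht.coeff_eps_eq_sum hφ0 hn, Icc_eq_empty (by omega), sum_empty]

theorem exists_tendsto_coeff_eps_div (ht : IsTSeq φ t) (hφ0 : φ 0 = 0)
    (hφ : ∀ i, 1 ≤ i → 0 ≤ φ i)
    (hratio : ∀ k : ℕ, ∃ l : ℝ, 0 ≤ l ∧ Tendsto (fun n : ℕ => φ (k + n) / φ n) atTop (nhds l))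
    (j : ℕ) :
    ∃ c : ℝ, 0 ≤ c ∧ Tendsto (fun n : ℕ => (eps φ t n).coeff j / φ (n - j)) atTop (nhds c) := by
  choose l hl0 hl using hratio
  refine ⟨∑ s ∈ Icc 1 j, (excess t j s).coeff j * l (j - s),
    sum_nonneg fun s _ => mul_nonneg (ht.excess_mem_nonnegCoeffs hφ j s j) (hl0 _), ?_⟩
  have hlim : Tendsto (fun n => ∑ s ∈ Icc 1 j,
      (excess t j s).coeff j * (φ (j - s + (n - j)) / φ (n - j))) atTop
      (nhds (∑ s ∈ Icc 1 j, (excess t j s).coeff j * l (j - s))) :=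
    tendsto_finsetSum _ fun s _ => ((hl (j - s)).comp (tendsto_sub_atTop_nat j)).const_mul _
  refine hlim.congr' (eventually_atTop.mpr ⟨2 * j + 1, fun n hn => ?_⟩)
  dsimp only
  rw [ht.coeff_eps_eq_sum_of_lt hφ0 (by omega : 2 * j < n), sum_div]
  refine sum_congr rfl fun s hs => ?_
  rw [mem_Icc] at hs
  rw [show j - s + (n - j) = n - s by omega, mul_div_assoc]

theorem exists_coeff_eps_le (ht : IsTSeq φ t) (hφ0 : φ 0 = 0) (hφ : ∀ i, 1 ≤ i → 0 ≤ φ i)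
    (j : ℕ) :
    ∃ c : ℝ, 0 ≤ c ∧ ∀ n : ℕ, 1 ≤ n →
      0 ≤ (eps φ t n).coeff j ∧ (eps φ t n).coeff j ≤ c * ∑ i ∈ Icc (n - j) (n - 1), φ i := by
  have hφ_nonneg (i : ℕ) : 0 ≤ φ i := by
    rcases Nat.eq_zero_or_pos i with rfl | hi
    · exact hφ0.ge
    · exact hφ i hi
  have hexcess (i s : ℕ) := ht.excess_mem_nonnegCoeffs hφ i s j
  have hbound (i s : ℕ) := ht.coeff_excess_le_sum hφ i s j
  refine ⟨_, (hexcess 0 0).trans (hbound 0 0), fun n hn => ?_⟩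
  rw [ht.coeff_eps_eq_sum hφ0 hn, mul_sum]
  refine ⟨sum_nonneg fun i _ => mul_nonneg (hφ_nonneg i) (hexcess _ _), sum_le_sum fun i _ => ?_⟩
  rw [mul_comm _ (φ i)]
  exact mul_le_mul_of_nonneg_left (hbound _ _) (hφ_nonneg i)

end IsTSeq

theorem stmt12_general (φ : ℕ → ℝ) (t : ℕ → Polynomial ℝ)
    (hφ0 : φ 0 = 0) (ht : IsTSeq φ t)
    (hnonneg : ∀ i, 1 ≤ i → 0 ≤ φ i)
    (hratio : ∀ j : ℕ, ∃ l : ℝ, 0 ≤ l ∧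
      Tendsto (fun n : ℕ => φ (j + n) / φ n) atTop (nhds l)) :
    (∀ n : ℕ,
      ((t n - ∑ i ∈ Finset.Icc 1 n, Polynomial.C (φ i) * t (n - i)).coeff 0)
        = if n = 0 then 1 else 0) ∧
    (∀ j : ℕ, ∃ c : ℝ, 0 ≤ c ∧
      Tendsto (fun n : ℕ =>
          (t n - ∑ i ∈ Finset.Icc 1 n, Polynomial.C (φ i) * t (n - i)).coeff j
            / φ (n - j))
        atTop (nhds c)) ∧
    (∀ j : ℕ, ∃ c : ℝ, 0 ≤ c ∧ ∀ n : ℕ, 1 ≤ n →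
      0 ≤ (t n - ∑ i ∈ Finset.Icc 1 n, Polynomial.C (φ i) * t (n - i)).coeff j ∧
      (t n - ∑ i ∈ Finset.Icc 1 n, Polynomial.C (φ i) * t (n - i)).coeff j
        ≤ c * ∑ i ∈ Finset.Icc (n - j) (n - 1), φ i) :=
  ⟨ht.coeff_zero_eps hφ0, ht.exists_tendsto_coeff_eps_div hφ0 hnonneg hratio,
    ht.exists_coeff_eps_le hφ0 hnonneg⟩

/-- with `ε_n = t_n − ∑_{i=1}^n φ_i t_{n−i} ∈ ℝ[q]`, assuming `φ_i ≥ 0`,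
eventual positivity, and existence of the ratio limits `lim φ_{j+n}/φ_n ∈ [0,∞)`:
(i) `[q^0]ε_n = 𝟙{n = 0}`; (ii) for each `j` there is `c_j ≥ 0` with
`[q^j]ε_n / φ_{n−j} → c_j`; (iii) for each `j` there is `c̃_j ≥ 0` with
`0 ≤ [q^j]ε_n ≤ c̃_j ∑_{i=n−j}^{n−1} φ_i` for all `n ≥ 1`. -/
theorem stmt12 (φ : ℕ → ℝ) (t : ℕ → Polynomial ℝ)
    (hφ0 : φ 0 = 0) (ht : IsTSeq φ t)
    (hnonneg : ∀ i, 1 ≤ i → 0 ≤ φ i)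
    (hpos : ∃ N, ∀ n, N ≤ n → 0 < φ n)
    (hratio : ∀ j : ℕ, ∃ l : ℝ, 0 ≤ l ∧
      Tendsto (fun n : ℕ => φ (j + n) / φ n) atTop (nhds l)) :
    (∀ n : ℕ,
      ((t n - ∑ i ∈ Finset.Icc 1 n, Polynomial.C (φ i) * t (n - i)).coeff 0)
        = if n = 0 then 1 else 0) ∧
    (∀ j : ℕ, ∃ c : ℝ, 0 ≤ c ∧
      Tendsto (fun n : ℕ =>
          (t n - ∑ i ∈ Finset.Icc 1 n, Polynomial.C (φ i) * t (n - i)).coeff j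
            / φ (n - j))
        atTop (nhds c)) ∧
    (∀ j : ℕ, ∃ c : ℝ, 0 ≤ c ∧ ∀ n : ℕ, 1 ≤ n →
      0 ≤ (t n - ∑ i ∈ Finset.Icc 1 n, Polynomial.C (φ i) * t (n - i)).coeff j ∧
      (t n - ∑ i ∈ Finset.Icc 1 n, Polynomial.C (φ i) * t (n - i)).coeff j
        ≤ c * ∑ i ∈ Finset.Icc (n - j) (n - 1), φ i) :=
  stmt12_general φ t hφ0 ht hnonneg hratio
end
end

section
/- Assume: (a) φ_n≥0 for all n≥1 with ∑_{n≥1} φ_n=1 (so ζ=min{x>0: φ(x)=1}=1); (b) limsup_{n→∞} (log φ_n)/(n log n) < −2; (c) the function θ(z)=(1−φ(z))/(1−z) extends to an entire function with no zeros in the closed disk |z|≤1. Then for every q∈[0,1) there exists r∈[0,1) such that ε_n(q) ≤ r^n for all sufficiently large n, where ε_n=t_n−∑_{i=1}^{n} φ_i t_{n−i}∈ℝ[q] and ε_n(q) is its value at q. -/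
open Filter Finset Polynomial

noncomputable section

open scoped Topology

/-!
Write `q = u ^ 4` with `0 ≤ u < 1`. In the recursion evaluated at `q`, the tuples `(n - i, 0, …, 0)`
reproduce `∑ φ_i t_{n-i}(q)`, so `ε_n(q)` is the contribution of all other tuples. For those,
`4 L ≥ m (m - max_j n_j) + m + ∑ j n_j` with `m = n - i`: the first term pays for the crude bound
`t_k(q) ≤ t_k(1) ≤ A ^ k` on all entries but the largest one, the second supplies a factor `u ^ m`,
and the third makes the sum over tuples geometric. Hence `ε_n(q) ≤ C (max_{k<n} t_k(q)) γ_n` with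
`γ_n = ∑ φ_i (1 - u)^{-i} u^{n-i}`. The superexponential decay of `φ` gives both the bound on
`t_k(1)` and `γ_n = O(n ρ^n)` for `ρ = (1 + u) / 2`. As `∑ γ_n < ∞` and `∑ φ_i ≤ 1`, a Gronwall argument
bounds `t_n(q)` uniformly in `n`, so `ε_n(q) = O(n ρ^n)`, which is eventually below `r^n` for any
`r ∈ (ρ, 1)`.
-/

theorem geom_sum_range_le_inv_one_sub {x : ℝ} (hx0 : 0 ≤ x) (hx1 : x < 1) (N : ℕ) :
    ∑ k ∈ range N, x ^ k ≤ (1 - x)⁻¹ := by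
  have h := geom_sum_Ico_le_of_lt_one (m := 0) (n := N) hx0 hx1
  rwa [← range_eq_Ico, pow_zero, one_div] at h

theorem sum_range_one_div_add_one_sq_le_two (N : ℕ) :
    ∑ k ∈ range N, 1 / ((k : ℝ) + 1) ^ 2 ≤ 2 := by
  have h := sum_Ioo_inv_sq_le (α := ℝ) 0 (N + 1)
  rw [← Finset.Ico_add_one_left_eq_Ioo, sum_Ico_eq_sum_range] at h
  simpa [add_comm] using h

theorem one_div_sq_le_of_le_mul {a b c : ℝ} (ha : 0 < a) (hb : 0 < b) (h : b ≤ c * a) :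
    1 / a ^ 2 ≤ c ^ 2 * (1 / b ^ 2) := by
  rw [mul_one_div, div_le_div_iff₀ (by positivity) (by positivity), one_mul, ← mul_pow]
  exact pow_le_pow_left₀ hb.le h 2

theorem exists_pow_eq_of_lt_one {q : ℝ} (hq0 : 0 ≤ q) (hq1 : q < 1) {k : ℕ} (hk : k ≠ 0) :
    ∃ u, 0 ≤ u ∧ u < 1 ∧ u ^ k = q := by
  have hroot := Real.rpow_inv_natCast_pow hq0 hk
  exact ⟨_, by positivity, (pow_lt_one_iff_of_nonneg (by positivity) hk).1 (by rwa [hroot]), hroot⟩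

theorem pow_mul_pow_mul_le_pow {A u : ℝ} {N₀ n s : ℕ} (hA : 1 ≤ A) (hu0 : 0 ≤ u) (hu1 : u ≤ 1)
    (hN₀ : A * u ^ N₀ ≤ 1) (hs : s ≤ n) : A ^ s * u ^ (n * s) ≤ A ^ N₀ := by
  rw [pow_mul, ← mul_pow]
  rcases le_total N₀ n with h | h
  · calc (A * u ^ n) ^ s ≤ 1 := pow_le_one₀ (by positivity)
          ((mul_le_mul_of_nonneg_left (pow_le_pow_of_le_one hu0 hu1 h) (by positivity)).trans hN₀)
      _ ≤ A ^ N₀ := one_le_pow₀ hA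
  · calc (A * u ^ n) ^ s ≤ A ^ s :=
          pow_le_pow_left₀ (by positivity) (mul_le_of_le_one_right (by positivity)
            (pow_le_one₀ hu0 hu1)) s
      _ ≤ A ^ N₀ := pow_le_pow_right₀ hA (hs.trans h)

theorem pow_sub_mul_le_sixtyFour_pow_mul {A : ℝ} {i n : ℕ} (hA : 1 ≤ A) (hi : 1 ≤ i)
    (hin : i ≤ n) :
    A ^ (n - i) * (((i : ℝ) + 1) ^ 3 * 2 ^ i * (1 / (((n - i : ℕ) : ℝ) + 1) ^ 2)) ≤
      64 ^ i * (A ^ (n - 1) * (1 / ((n : ℝ) + 1) ^ 2)) := by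
  have hshift :
      1 / (((n - i : ℕ) : ℝ) + 1) ^ 2 ≤ ((i : ℝ) + 1) ^ 2 * (1 / ((n : ℝ) + 1) ^ 2) := by
    have : (i : ℝ) ≤ n := by exact_mod_cast hin
    refine one_div_sq_le_of_le_mul (by positivity) (by positivity) ?_
    push_cast [Nat.cast_sub hin]
    nlinarith
  have h64 : ((i : ℝ) + 1) ^ 5 * 2 ^ i ≤ 64 ^ i := by
    have h2i : (i : ℝ) + 1 ≤ 2 ^ i := by exact_mod_cast Nat.lt_two_pow_self
    calc ((i : ℝ) + 1) ^ 5 * 2 ^ i ≤ (2 ^ i) ^ 5 * 2 ^ i := by gcongr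
      _ = 64 ^ i := by
        rw [← pow_mul, ← pow_add, show (64 : ℝ) = 2 ^ 6 by norm_num, ← pow_mul]; ring_nf
  calc A ^ (n - i) * (((i : ℝ) + 1) ^ 3 * 2 ^ i * (1 / (((n - i : ℕ) : ℝ) + 1) ^ 2))
      ≤ A ^ (n - 1) *
          (((i : ℝ) + 1) ^ 3 * 2 ^ i * (((i : ℝ) + 1) ^ 2 * (1 / ((n : ℝ) + 1) ^ 2))) := by
        gcongr
    _ = ((i : ℝ) + 1) ^ 5 * 2 ^ i * (A ^ (n - 1) * (1 / ((n : ℝ) + 1) ^ 2)) := by ring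
    _ ≤ 64 ^ i * (A ^ (n - 1) * (1 / ((n : ℝ) + 1) ^ 2)) := by gcongr

theorem eventually_mul_pow_le_pow_of_le_exp {φ : ℕ → ℝ} {c : ℝ} (hc : c < 0)
    (h : ∀ᶠ n : ℕ in atTop, φ n ≤ Real.exp (c * n * Real.log n)) {R β : ℝ} (hR : 0 < R)
    (hβ : 0 < β) : ∀ᶠ n : ℕ in atTop, φ n * R ^ n ≤ β ^ n := by
  have hlog : Tendsto (fun n : ℕ => Real.log n) atTop atTop :=
    Real.tendsto_log_atTop.comp tendsto_natCast_atTop_atTop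
  filter_upwards [h, hlog.eventually_ge_atTop ((Real.log β - Real.log R) / c)] with n hn hn'
  have hcl : c * Real.log n ≤ Real.log β - Real.log R := by
    rwa [div_le_iff_of_neg hc, mul_comm] at hn'
  have hexp : c * n * Real.log n + n * Real.log R ≤ n * Real.log β := by
    nlinarith [mul_le_mul_of_nonneg_left hcl n.cast_nonneg]
  calc φ n * R ^ n ≤ Real.exp (c * n * Real.log n) * Real.exp (n * Real.log R) := by
        rw [Real.exp_nat_mul, Real.exp_log hR]
        exact mul_le_mul_of_nonneg_right hn (by positivity)
    _ ≤ Real.exp (n * Real.log β) := by rw [← Real.exp_add]; exact Real.exp_le_exp.2 hexp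
    _ = β ^ n := by rw [Real.exp_nat_mul, Real.exp_log hβ]

theorem summable_of_eventually_le_half_pow {a : ℕ → ℝ} (ha : ∀ n, 0 ≤ a n)
    (h : ∀ᶠ n in atTop, a n ≤ (1 / 2) ^ n) : Summable a :=
  Summable.of_norm_bounded_eventually_nat (summable_geometric_two) <| by
    filter_upwards [h] with n hn
    rwa [Real.norm_of_nonneg (ha n)]

theorem exists_le_mul_pow_of_eventually_le {a : ℕ → ℝ} {ρ : ℝ} (hρ : 0 < ρ)
    (ha : ∀ n, 0 ≤ a n) (h : ∀ᶠ n in atTop, a n ≤ ρ ^ n) : ∃ D, ∀ n, a n ≤ D * ρ ^ n := by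
  have hO : a =O[atTop] fun n => ρ ^ n := Asymptotics.IsBigO.of_bound 1 <| by
    filter_upwards [h] with n hn
    rwa [Real.norm_of_nonneg (ha n), Real.norm_of_nonneg (by positivity), one_mul]
  obtain ⟨D, hD⟩ := (Asymptotics.isBigO_nat_atTop_iff fun n hn =>
    absurd hn (pow_ne_zero n hρ.ne')).1 hO
  refine ⟨D, fun n => ?_⟩
  simpa [Real.norm_of_nonneg (ha n), abs_of_pos hρ] using hD n

theorem sum_Icc_mul_pow_sub_le {a : ℕ → ℝ} {u ρ D : ℝ} (hu0 : 0 ≤ u) (huρ : u ≤ ρ)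
    (ha0 : ∀ i, 0 ≤ a i) (ha : ∀ i, a i ≤ D * ρ ^ i) (n : ℕ) :
    ∑ i ∈ Icc 1 n, a i * u ^ (n - i) ≤ D * (n * ρ ^ n) := by
  calc ∑ i ∈ Icc 1 n, a i * u ^ (n - i) ≤ ∑ _i ∈ Icc 1 n, D * ρ ^ n := by
        refine sum_le_sum fun i hi => ?_
        calc a i * u ^ (n - i) ≤ D * ρ ^ i * ρ ^ (n - i) :=
              mul_le_mul (ha i) (pow_le_pow_left₀ hu0 huρ _) (by positivity) ((ha0 i).trans (ha i))
          _ = D * ρ ^ n := by rw [mul_assoc, ← pow_add, Nat.add_sub_cancel' (mem_Icc.1 hi).2]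
    _ = D * (n * ρ ^ n) := by
        rw [sum_const, Nat.card_Icc, add_tsub_cancel_right, nsmul_eq_mul]; ring

theorem le_exp_tsum_of_le_mul_one_add {x γ : ℕ → ℝ} (hγ0 : ∀ n, 0 ≤ γ n) (hγ : Summable γ)
    (hx0 : x 0 ≤ 1) (hstep : ∀ n, 1 ≤ n → ∀ M, (∀ k < n, x k ≤ M) → x n ≤ M * (1 + γ n))
    (n : ℕ) : x n ≤ Real.exp (∑' k, γ k) := by
  have key : ∀ n, ∀ k ≤ n, x k ≤ Real.exp (∑ k ∈ range (n + 1), γ k) := by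
    intro n
    induction n with
    | zero =>
      intro k hk
      obtain rfl := Nat.le_zero.1 hk
      simpa using hx0.trans (Real.one_le_exp (hγ0 0))
    | succ n ih =>
      have hmono : Real.exp (∑ k ∈ range (n + 1), γ k) ≤ Real.exp (∑ k ∈ range (n + 2), γ k) := by
        rw [Real.exp_le_exp, sum_range_succ _ (n + 1)]
        linarith [hγ0 (n + 1)]
      intro k hk
      rcases hk.lt_or_eq with hk | rfl
      · exact (ih k (by omega)).trans hmono
      · calc x (n + 1) ≤ Real.exp (∑ k ∈ range (n + 1), γ k) * (1 + γ (n + 1)) :=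
              hstep _ n.succ_pos _ fun k hk => ih k (by omega)
          _ ≤ Real.exp (∑ k ∈ range (n + 1), γ k) * Real.exp (γ (n + 1)) := by
              gcongr
              linarith [Real.add_one_le_exp (γ (n + 1))]
          _ = Real.exp (∑ k ∈ range (n + 2), γ k) := by
              rw [← Real.exp_add, sum_range_succ _ (n + 1)]
  exact (key n n le_rfl).trans (Real.exp_le_exp.2 (hγ.sum_le_tsum _ fun k _ => hγ0 k))

theorem exists_eventually_le_pow_of_le_mul_pow {x : ℕ → ℝ} {K ρ : ℝ} (hρ0 : 0 ≤ ρ) (hρ1 : ρ < 1)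
    (hx : ∀ᶠ n in atTop, x n ≤ K * (n * ρ ^ n)) :
    ∃ r, 0 ≤ r ∧ r < 1 ∧ ∀ᶠ n in atTop, x n ≤ r ^ n := by
  set r := (1 + ρ) / 2
  have hr : 0 < r := by positivity
  have hρr : ρ < r := by simp only [r]; linarith
  have hlim : Tendsto (fun n : ℕ => K * (n * (ρ / r) ^ n)) atTop (𝓝 0) := by
    simpa using (tendsto_self_mul_const_pow_of_lt_one (by positivity)
      ((div_lt_one hr).2 hρr)).const_mul K
  refine ⟨r, hr.le, by simp only [r]; linarith, ?_⟩
  filter_upwards [hx, hlim.eventually_lt_const zero_lt_one] with n hn hsmall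
  calc x n ≤ K * (n * ρ ^ n) := hn
    _ = K * (n * (ρ / r) ^ n) * r ^ n := by rw [div_pow]; field_simp
    _ ≤ r ^ n := mul_le_of_le_one_left (by positivity) hsmall.le

theorem summable_of_le_mul_self_mul_pow {a : ℕ → ℝ} {D ρ : ℝ} (ha0 : ∀ n, 0 ≤ a n) (hρ0 : 0 ≤ ρ)
    (hρ1 : ρ < 1) (ha : ∀ n, a n ≤ D * (n * ρ ^ n)) : Summable a :=
  .of_nonneg_of_le ha0 ha <| by
    simpa using (summable_pow_mul_geometric_of_norm_lt_one 1
      (by rwa [Real.norm_of_nonneg hρ0])).mul_left D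

theorem apply_le_of_sum_eq {k n : ℕ} {ns : Fin k → ℕ} (h : ∑ j, ns j = n) (j : Fin k) :
    ns j ≤ n :=
  h ▸ single_le_sum (fun _ _ => Nat.zero_le _) (mem_univ j)

theorem lt_of_mem_antidiagonalTuple_sub {i n : ℕ} (hi : 1 ≤ i) (hn : 1 ≤ n) {ns : Fin (i + 1) → ℕ}
    (hns : ns ∈ Nat.antidiagonalTuple (i + 1) (n - i)) (j : Fin (i + 1)) : ns j < n := by
  have := apply_le_of_sum_eq (Nat.mem_antidiagonalTuple.1 hns) j
  omega

theorem injOn_update_zero {k m : ℕ} {S : Finset (Fin k → ℕ)} (hS : S ⊆ Nat.antidiagonalTuple k m)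
    (jx : Fin k) : Set.InjOn (Function.update · jx 0) (S : Set (Fin k → ℕ)) := by
  intro x hx y hy hxy
  have hrest : ∀ j ≠ jx, x j = y j := fun j hj => by
    simpa [Function.update_of_ne hj] using congrFun hxy j
  have hsum : x jx + ∑ j ∈ univ.erase jx, x j = y jx + ∑ j ∈ univ.erase jx, y j := by
    rw [add_sum_erase _ _ (mem_univ jx), add_sum_erase _ _ (mem_univ jx),
      Nat.mem_antidiagonalTuple.1 (hS hx), Nat.mem_antidiagonalTuple.1 (hS hy)]
  rw [sum_congr rfl fun j hj => hrest j (ne_of_mem_erase hj)] at hsum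
  funext j
  by_cases hj : j = jx
  · exact hj ▸ Nat.add_right_cancel hsum
  · exact hrest j hj

theorem sum_prod_erase_le_prod_sum {k m : ℕ} {S : Finset (Fin k → ℕ)}
    (hS : S ⊆ Nat.antidiagonalTuple k m) (jx : Fin k) {g : Fin k → ℕ → ℝ}
    (hg : ∀ j t, 0 ≤ g j t) :
    ∑ ns ∈ S, ∏ j ∈ univ.erase jx, g j (ns j) ≤
      ∏ j ∈ univ.erase jx, ∑ t ∈ range (m + 1), g j t := by
  classical
  let G : Fin k → ℕ → ℝ := fun j t => if j = jx then 1 else g j t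
  let T : Fin k → Finset ℕ := fun j => if j = jx then {0} else range (m + 1)
  have hG : ∀ p : Fin k → ℕ, ∏ j, G j (p j) = ∏ j ∈ univ.erase jx, g j (p j) := fun p => by
    rw [← mul_prod_erase _ _ (mem_univ jx)]
    simp +contextual [G, prod_congr rfl]
  calc ∑ ns ∈ S, ∏ j ∈ univ.erase jx, g j (ns j)
      = ∑ p ∈ S.image (Function.update · jx 0), ∏ j, G j (p j) := by
        rw [sum_image (injOn_update_zero hS jx)]
        refine sum_congr rfl fun ns _ => ?_
        rw [hG]
        exact prod_congr rfl fun j hj => by rw [Function.update_of_ne (ne_of_mem_erase hj)]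
    _ ≤ ∑ p ∈ Fintype.piFinset T, ∏ j, G j (p j) := by
        refine sum_le_sum_of_subset_of_nonneg ?_ fun p _ _ => prod_nonneg fun j _ => ?_
        · intro p hp
          obtain ⟨ns, hns, rfl⟩ := mem_image.1 hp
          refine Fintype.mem_piFinset.2 fun j => ?_
          by_cases hj : j = jx
          · simp [T, hj]
          · simpa [T, hj, Function.update_of_ne hj, Nat.lt_succ_iff]
              using apply_le_of_sum_eq (Nat.mem_antidiagonalTuple.1 (hS hns)) j
        · by_cases hj : j = jx <;> simp [G, hj, hg]
    _ = ∏ j ∈ univ.erase jx, ∑ t ∈ range (m + 1), g j t := by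
        rw [← prod_univ_sum, ← mul_prod_erase _ _ (mem_univ jx)]
        simp +contextual [G, T, prod_congr rfl]

theorem one_div_sq_le_of_le_max {k m : ℕ} (hk : k ≠ 0) {ns : Fin k → ℕ} (hns : ∑ j, ns j = m)
    {jx : Fin k} (hjx : ∀ j, ns j ≤ ns jx) :
    1 / ((ns jx : ℝ) + 1) ^ 2 ≤ k ^ 2 * (1 / ((m : ℝ) + 1) ^ 2) := by
  have hle : m ≤ k * ns jx := by
    calc m = ∑ j, ns j := hns.symm
      _ ≤ ∑ _j : Fin k, ns jx := sum_le_sum fun j _ => hjx j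
      _ = k * ns jx := by rw [sum_const, card_univ, Fintype.card_fin, smul_eq_mul]
  have hk1 : (1 : ℝ) ≤ k := by exact_mod_cast Nat.one_le_iff_ne_zero.2 hk
  have hle' : (m : ℝ) ≤ k * ns jx := by exact_mod_cast hle
  exact one_div_sq_le_of_le_mul (by positivity) (by positivity) (by nlinarith)

theorem sum_antidiagonalTuple_prod_one_div_sq_le {k : ℕ} (hk : k ≠ 0) (m : ℕ) :
    ∑ ns ∈ Nat.antidiagonalTuple k m, ∏ j, 1 / ((ns j : ℝ) + 1) ^ 2 ≤
      k ^ 3 * 2 ^ (k - 1) * (1 / ((m : ℝ) + 1) ^ 2) := by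
  classical
  set w : ℕ → ℝ := fun a => 1 / ((a : ℝ) + 1) ^ 2
  have hw0 : ∀ a, 0 ≤ w a := fun a => by positivity
  have : Nonempty (Fin k) := ⟨⟨0, Nat.pos_of_ne_zero hk⟩⟩
  choose jm hjm using fun ns : Fin k → ℕ => Finite.exists_max ns
  have hfiber : ∀ jx, ∑ ns ∈ (Nat.antidiagonalTuple k m).filter (jm · = jx), ∏ j, w (ns j) ≤
      k ^ 2 * w m * 2 ^ (k - 1) := by
    intro jx
    calc ∑ ns ∈ (Nat.antidiagonalTuple k m).filter (jm · = jx), ∏ j, w (ns j)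
        ≤ ∑ ns ∈ (Nat.antidiagonalTuple k m).filter (jm · = jx),
            k ^ 2 * w m * ∏ j ∈ univ.erase jx, w (ns j) := by
          refine sum_le_sum fun ns hns => ?_
          obtain ⟨hmem, rfl⟩ := mem_filter.1 hns
          rw [← mul_prod_erase _ _ (mem_univ (jm ns))]
          exact mul_le_mul_of_nonneg_right
            (one_div_sq_le_of_le_max hk (Nat.mem_antidiagonalTuple.1 hmem) (hjm ns))
            (prod_nonneg fun j _ => hw0 _)
      _ ≤ k ^ 2 * w m * ∏ j ∈ univ.erase jx, ∑ a ∈ range (m + 1), w a := by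
          rw [← mul_sum]
          exact mul_le_mul_of_nonneg_left (sum_prod_erase_le_prod_sum (filter_subset _ _) jx
            fun _ a => hw0 a) (by positivity)
      _ ≤ k ^ 2 * w m * 2 ^ (k - 1) := by
          refine mul_le_mul_of_nonneg_left ?_ (by positivity)
          calc ∏ j ∈ univ.erase jx, ∑ a ∈ range (m + 1), w a ≤ ∏ j ∈ univ.erase jx, (2 : ℝ) :=
                prod_le_prod (fun _ _ => sum_nonneg fun a _ => hw0 a)
                  fun _ _ => sum_range_one_div_add_one_sq_le_two _
            _ = 2 ^ (k - 1) := by simp [card_erase_of_mem]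
  calc ∑ ns ∈ Nat.antidiagonalTuple k m, ∏ j, w (ns j)
      = ∑ jx, ∑ ns ∈ (Nat.antidiagonalTuple k m).filter (jm · = jx), ∏ j, w (ns j) :=
        (sum_fiberwise _ _ _).symm
    _ ≤ ∑ _jx : Fin k, k ^ 2 * w m * 2 ^ (k - 1) := sum_le_sum fun jx _ => hfiber jx
    _ = k ^ 3 * 2 ^ (k - 1) * w m := by
        rw [sum_const, card_univ, Fintype.card_fin, nsmul_eq_mul]; ring

theorem sum_antidiagonalTuple_prod_le_pow_mul {τ : ℕ → ℝ} {A : ℝ} {k m : ℕ} (hk : k ≠ 0)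
    (hA : 0 ≤ A) (hτ0 : ∀ a, 0 ≤ τ a) (hτ : ∀ a ≤ m, τ a ≤ A ^ a * (1 / ((a : ℝ) + 1) ^ 2)) :
    ∑ ns ∈ Nat.antidiagonalTuple k m, ∏ j, τ (ns j) ≤
      A ^ m * (k ^ 3 * 2 ^ (k - 1) * (1 / ((m : ℝ) + 1) ^ 2)) := by
  calc ∑ ns ∈ Nat.antidiagonalTuple k m, ∏ j, τ (ns j)
      ≤ ∑ ns ∈ Nat.antidiagonalTuple k m, A ^ m * ∏ j, 1 / ((ns j : ℝ) + 1) ^ 2 := by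
        refine sum_le_sum fun ns hns => ?_
        have hsum := Nat.mem_antidiagonalTuple.1 hns
        calc ∏ j, τ (ns j) ≤ ∏ j, A ^ ns j * (1 / ((ns j : ℝ) + 1) ^ 2) :=
              prod_le_prod (fun j _ => hτ0 _) fun j _ => hτ _ (apply_le_of_sum_eq hsum j)
          _ = A ^ m * ∏ j, 1 / ((ns j : ℝ) + 1) ^ 2 := by
              rw [prod_mul_distrib, prod_pow_eq_pow_sum, hsum]
    _ ≤ A ^ m * (k ^ 3 * 2 ^ (k - 1) * (1 / ((m : ℝ) + 1) ^ 2)) := by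
        rw [← mul_sum]
        exact mul_le_mul_of_nonneg_left (sum_antidiagonalTuple_prod_one_div_sq_le hk m)
          (pow_nonneg hA m)

theorem two_mul_choose_two_add_self (n : ℕ) : 2 * n.choose 2 + n = n * n := by
  rw [Nat.choose_two_right, Nat.mul_div_cancel' (Nat.even_mul_pred_self n).two_dvd]
  cases n <;> simp [Nat.mul_succ]

theorem sum_mul_self_le_mul_sum {k m : ℕ} (ns : Fin k → ℕ) (hm : ∀ j, ns j ≤ m) :
    ∑ j, ns j * ns j ≤ m * ∑ j, ns j := by
  rw [mul_sum]
  exact sum_le_sum fun j _ => Nat.mul_le_mul_right _ (hm j)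

theorem Ldeg_cons_zero (i n : ℕ) : Ldeg (i + 1) (Fin.cons n 0) = 0 := by
  simp [Ldeg, Fin.sum_univ_succ]

theorem two_mul_Ldeg_add_sum_mul_self {k n : ℕ} {ns : Fin k → ℕ} (hns : ∑ j, ns j = n) :
    2 * Ldeg k ns + ∑ j, ns j * ns j = n * n + 2 * ∑ j : Fin k, (j : ℕ) * ns j := by
  have hsq : 2 * ∑ j, (ns j).choose 2 + n = ∑ j, ns j * ns j := by
    rw [mul_sum, ← hns, ← sum_add_distrib]
    exact sum_congr rfl fun j _ => two_mul_choose_two_add_self _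
  have hle : ∑ j, ns j * ns j ≤ n * n :=
    by simpa only [hns] using sum_mul_self_le_mul_sum ns (apply_le_of_sum_eq hns)
  have hn := two_mul_choose_two_add_self n
  unfold Ldeg
  rw [hns]
  omega

theorem mul_sub_add_le_two_mul_Ldeg {k n : ℕ} {ns : Fin k → ℕ} (hns : ∑ j, ns j = n) {jx : Fin k}
    (hjx : ∀ j, ns j ≤ ns jx) :
    n * (n - ns jx) + 2 * ∑ j : Fin k, (j : ℕ) * ns j ≤ 2 * Ldeg k ns := by
  have hsq := hns ▸ sum_mul_self_le_mul_sum ns hjx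
  have hid := two_mul_Ldeg_add_sum_mul_self hns
  have hjxn := Nat.mul_le_mul_right n (apply_le_of_sum_eq hns jx)
  rw [Nat.mul_sub, Nat.mul_comm n (ns jx)]
  omega

theorem le_mul_sub_add_of_ne_cons {i n : ℕ} {ns : Fin (i + 1) → ℕ} (hns : ∑ j, ns j = n)
    {jx : Fin (i + 1)} (hjx : ∀ j, ns j ≤ ns jx) (hne : ns ≠ Fin.cons n 0) :
    n ≤ n * (n - ns jx) + ∑ j : Fin (i + 1), (j : ℕ) * ns j := by
  rcases (apply_le_of_sum_eq hns jx).lt_or_eq with hlt | heq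
  · exact le_add_right (Nat.le_mul_of_pos_right n (Nat.sub_pos_of_lt hlt))
  · refine le_add_left ?_
    rcases Fin.eq_zero_or_eq_succ jx with rfl | ⟨j', rfl⟩
    · -- a tuple whose first entry is the whole sum is `Fin.cons n 0`
      refine absurd (funext fun j => Fin.cases heq (fun j' => ?_) j) hne
      rw [Fin.sum_univ_succ, heq] at hns
      simpa using (sum_eq_zero_iff.1 (by omega : ∑ j : Fin i, ns j.succ = 0)) j' (mem_univ _)
    · calc n = 1 * ns j'.succ := by rw [heq, one_mul]
        _ ≤ (j'.succ : ℕ) * ns j'.succ := Nat.mul_le_mul_right _ (by simp)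
        _ ≤ ∑ j : Fin (i + 1), (j : ℕ) * ns j :=
          single_le_sum (f := fun j : Fin (i + 1) => (j : ℕ) * ns j) (fun _ _ => Nat.zero_le _)
            (mem_univ _)

theorem mul_sub_add_add_le_four_mul_Ldeg {i n : ℕ} {ns : Fin (i + 1) → ℕ} (hns : ∑ j, ns j = n)
    {jx : Fin (i + 1)} (hjx : ∀ j, ns j ≤ ns jx) (hne : ns ≠ Fin.cons n 0) :
    n * (n - ns jx) + n + ∑ j : Fin (i + 1), (j : ℕ) * ns j ≤ 4 * Ldeg (i + 1) ns := by
  have := mul_sub_add_le_two_mul_Ldeg hns hjx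
  have := le_mul_sub_add_of_ne_cons hns hjx hne
  omega

theorem prod_mul_pow_Ldeg_le {τ : ℕ → ℝ} {u A M : ℝ} {N₀ i n : ℕ}
    (hτ0 : ∀ m, 0 ≤ τ m) (hτA : ∀ m, τ m ≤ A ^ m) (hτM : ∀ m ≤ n, τ m ≤ M)
    (hu0 : 0 ≤ u) (hu1 : u ≤ 1) (hA : 1 ≤ A) (hN₀ : A * u ^ N₀ ≤ 1)
    {ns : Fin (i + 1) → ℕ} (hns : ∑ j, ns j = n) (hne : ns ≠ Fin.cons n 0) :
    (∏ j, τ (ns j)) * (u ^ 4) ^ Ldeg (i + 1) ns ≤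
      M * A ^ N₀ * u ^ n * ∏ j ∈ univ.erase (0 : Fin (i + 1)), (u ^ (j : ℕ)) ^ ns j := by
  obtain ⟨jx, hjx⟩ := Finite.exists_max ns
  set J := ∑ j : Fin (i + 1), (j : ℕ) * ns j
  have hM : 0 ≤ M := (hτ0 _).trans (hτM _ (apply_le_of_sum_eq hns jx))
  have hprod : ∏ j, τ (ns j) ≤ M * A ^ (n - ns jx) := by
    have hrest : ∑ j ∈ univ.erase jx, ns j = n - ns jx := by
      rw [← hns, ← add_sum_erase _ _ (mem_univ jx), Nat.add_sub_cancel_left]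
    rw [← mul_prod_erase _ _ (mem_univ jx), ← hrest, ← prod_pow_eq_pow_sum]
    exact mul_le_mul (hτM _ (apply_le_of_sum_eq hns jx))
      (prod_le_prod (fun _ _ => hτ0 _) fun _ _ => hτA _) (prod_nonneg fun _ _ => hτ0 _) hM
  have hpow : (u ^ 4) ^ Ldeg (i + 1) ns ≤ u ^ (n * (n - ns jx)) * u ^ n * u ^ J := by
    rw [← pow_mul, ← pow_add, ← pow_add]
    exact pow_le_pow_of_le_one hu0 hu1 (mul_sub_add_add_le_four_mul_Ldeg hns hjx hne)
  have hJ : u ^ J = ∏ j ∈ univ.erase (0 : Fin (i + 1)), (u ^ (j : ℕ)) ^ ns j := by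
    rw [← prod_pow_eq_pow_sum, ← mul_prod_erase _ _ (mem_univ 0)]
    simp [pow_mul]
  calc (∏ j, τ (ns j)) * (u ^ 4) ^ Ldeg (i + 1) ns
      ≤ M * A ^ (n - ns jx) * (u ^ (n * (n - ns jx)) * u ^ n * u ^ J) :=
        mul_le_mul hprod hpow (by positivity) (by positivity)
    _ = M * (A ^ (n - ns jx) * u ^ (n * (n - ns jx))) * u ^ n * u ^ J := by ring
    _ ≤ M * A ^ N₀ * u ^ n * u ^ J := by
        gcongr
        exact pow_mul_pow_mul_le_pow hA hu0 hu1 hN₀ (Nat.sub_le _ _)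
    _ = M * A ^ N₀ * u ^ n * ∏ j ∈ univ.erase (0 : Fin (i + 1)), (u ^ (j : ℕ)) ^ ns j := by rw [hJ]

theorem sum_erase_cons_prod_mul_pow_Ldeg_le {τ : ℕ → ℝ} {u A M : ℝ} {N₀ i n : ℕ}
    (hτ0 : ∀ m, 0 ≤ τ m) (hτA : ∀ m, τ m ≤ A ^ m) (hτM : ∀ m ≤ n, τ m ≤ M)
    (hu0 : 0 ≤ u) (hu1 : u < 1) (hA : 1 ≤ A) (hN₀ : A * u ^ N₀ ≤ 1) :
    ∑ ns ∈ (Nat.antidiagonalTuple (i + 1) n).erase (Fin.cons n 0),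
        (∏ j, τ (ns j)) * (u ^ 4) ^ Ldeg (i + 1) ns ≤
      M * A ^ N₀ * (1 - u)⁻¹ ^ i * u ^ n := by
  have hM : 0 ≤ M := (hτ0 0).trans (hτM 0 n.zero_le)
  have hgeom : ∀ j ∈ (univ : Finset (Fin (i + 1))).erase 0,
      ∑ a ∈ range (n + 1), (u ^ (j : ℕ)) ^ a ≤ (1 - u)⁻¹ := by
    intro j hj
    have hj0 : (j : ℕ) ≠ 0 := fun h => ne_of_mem_erase hj (Fin.ext h)
    have hle : u ^ (j : ℕ) ≤ u := pow_le_of_le_one hu0 hu1.le hj0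
    refine (geom_sum_range_le_inv_one_sub (by positivity) (hle.trans_lt hu1) _).trans ?_
    gcongr
  calc ∑ ns ∈ (Nat.antidiagonalTuple (i + 1) n).erase (Fin.cons n 0),
        (∏ j, τ (ns j)) * (u ^ 4) ^ Ldeg (i + 1) ns
      ≤ ∑ ns ∈ (Nat.antidiagonalTuple (i + 1) n).erase (Fin.cons n 0),
          M * A ^ N₀ * u ^ n * ∏ j ∈ univ.erase (0 : Fin (i + 1)), (u ^ (j : ℕ)) ^ ns j :=
        sum_le_sum fun ns hns => prod_mul_pow_Ldeg_le hτ0 hτA hτM hu0 hu1.le hA hN₀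
          (Nat.mem_antidiagonalTuple.1 (mem_of_mem_erase hns)) (ne_of_mem_erase hns)
    _ ≤ M * A ^ N₀ * u ^ n *
          ∏ j ∈ univ.erase (0 : Fin (i + 1)), ∑ a ∈ range (n + 1), (u ^ (j : ℕ)) ^ a := by
        rw [← mul_sum]
        gcongr
        exact sum_prod_erase_le_prod_sum (erase_subset _ _) 0 fun _ _ => by positivity
    _ ≤ M * A ^ N₀ * u ^ n * ∏ j ∈ (univ : Finset (Fin (i + 1))).erase 0, (1 - u)⁻¹ := by
        gcongr with j hj
        exact hgeom j hj
    _ = M * A ^ N₀ * (1 - u)⁻¹ ^ i * u ^ n := by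
        rw [prod_const, card_erase_of_mem (mem_univ _), card_univ, Fintype.card_fin,
          add_tsub_cancel_right]
        ring

def errPoly (φ : ℕ → ℝ) (t : ℕ → ℝ[X]) (n : ℕ) : ℝ[X] :=
  t n - ∑ i ∈ Icc 1 n, C (φ i) * t (n - i)

namespace IsTSeq

variable {φ : ℕ → ℝ} {t : ℕ → ℝ[X]}

theorem eval_eq (ht : IsTSeq φ t) (x : ℝ) {n : ℕ} (hn : 1 ≤ n) :
    (t n).eval x = ∑ i ∈ Icc 1 n, φ i * ∑ ns ∈ Nat.antidiagonalTuple (i + 1) (n - i),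
      (∏ j, (t (ns j)).eval x) * x ^ Ldeg (i + 1) ns := by
  simp [ht.2 n hn, eval_finsetSum, eval_prod]

theorem eval_nonneg_and_mono (ht : IsTSeq φ t) (hφ : ∀ i, 0 ≤ φ i) (n : ℕ) {x y : ℝ}
    (hx : 0 ≤ x) (hxy : x ≤ y) : 0 ≤ (t n).eval x ∧ (t n).eval x ≤ (t n).eval y := by
  induction n using Nat.strong_induction_on with
  | _ n ih =>
  rcases Nat.eq_zero_or_pos n with rfl | hn
  · simp [ht.1]
  rw [ht.eval_eq x hn, ht.eval_eq y hn]
  have hih : ∀ i ∈ Icc 1 n, ∀ ns ∈ Nat.antidiagonalTuple (i + 1) (n - i), ∀ j,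
      0 ≤ (t (ns j)).eval x ∧ (t (ns j)).eval x ≤ (t (ns j)).eval y :=
    fun i hi _ hns j => ih _ (lt_of_mem_antidiagonalTuple_sub (mem_Icc.1 hi).1 hn hns j)
  constructor
  · exact sum_nonneg fun i hi => mul_nonneg (hφ i) <| sum_nonneg fun ns hns =>
      mul_nonneg (prod_nonneg fun j _ => (hih i hi ns hns j).1) (pow_nonneg hx _)
  · gcongr with i hi ns hns j
    · exact hφ i
    · exact prod_nonneg fun j _ => (hih i hi ns hns j).1.trans (hih i hi ns hns j).2
    · exact fun j _ => (hih i hi ns hns j).1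
    · exact (hih i hi ns hns j).2

theorem eval_nonneg (ht : IsTSeq φ t) (hφ : ∀ i, 0 ≤ φ i) (n : ℕ) {x : ℝ} (hx : 0 ≤ x) :
    0 ≤ (t n).eval x :=
  (ht.eval_nonneg_and_mono hφ n hx le_rfl).1

theorem eval_le_eval (ht : IsTSeq φ t) (hφ : ∀ i, 0 ≤ φ i) (n : ℕ) {x y : ℝ} (hx : 0 ≤ x)
    (hxy : x ≤ y) : (t n).eval x ≤ (t n).eval y :=
  (ht.eval_nonneg_and_mono hφ n hx hxy).2

/-- The weight `1 / (n + 1) ^ 2` makes the induction close: its convolutions over tuples of length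
`k` cost only a factor polynomial in `k` (`sum_antidiagonalTuple_prod_one_div_sq_le`), while the
number of tuples is not bounded exponentially in `k` alone. -/
theorem eval_one_le_pow_mul_one_div_sq (ht : IsTSeq φ t) (hφ : ∀ i, 0 ≤ φ i) {S : ℝ}
    (hS : ∀ N, ∑ i ∈ Icc 1 N, φ i * 64 ^ i ≤ S) (n : ℕ) :
    (t n).eval 1 ≤ max 1 S ^ n * (1 / ((n : ℝ) + 1) ^ 2) := by
  set A := max 1 S
  have hA1 : 1 ≤ A := le_max_left _ _
  induction n using Nat.strong_induction_on with
  | _ n ih =>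
  rcases Nat.eq_zero_or_pos n with rfl | hn
  · simp [ht.1]
  have hterm : ∀ i ∈ Icc 1 n, ∑ ns ∈ Nat.antidiagonalTuple (i + 1) (n - i),
      (∏ j, (t (ns j)).eval 1) * 1 ^ Ldeg (i + 1) ns ≤
        64 ^ i * (A ^ (n - 1) * (1 / ((n : ℝ) + 1) ^ 2)) := by
    intro i hi
    obtain ⟨hi1, hin⟩ := mem_Icc.1 hi
    calc ∑ ns ∈ Nat.antidiagonalTuple (i + 1) (n - i),
          (∏ j, (t (ns j)).eval 1) * 1 ^ Ldeg (i + 1) ns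
        = ∑ ns ∈ Nat.antidiagonalTuple (i + 1) (n - i), ∏ j, (t (ns j)).eval 1 := by simp
      _ ≤ A ^ (n - i) * (((i + 1 : ℕ) : ℝ) ^ 3 * 2 ^ (i + 1 - 1) *
            (1 / (((n - i : ℕ) : ℝ) + 1) ^ 2)) :=
          sum_antidiagonalTuple_prod_le_pow_mul i.succ_ne_zero (by linarith)
            (fun a => ht.eval_nonneg hφ a zero_le_one) fun a ha => ih a (by omega)
      _ ≤ 64 ^ i * (A ^ (n - 1) * (1 / ((n : ℝ) + 1) ^ 2)) := by
          push_cast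
          exact pow_sub_mul_le_sixtyFour_pow_mul hA1 hi1 hin
  calc (t n).eval 1
      = ∑ i ∈ Icc 1 n, φ i * ∑ ns ∈ Nat.antidiagonalTuple (i + 1) (n - i),
          (∏ j, (t (ns j)).eval 1) * 1 ^ Ldeg (i + 1) ns := ht.eval_eq 1 hn
    _ ≤ ∑ i ∈ Icc 1 n, φ i * (64 ^ i * (A ^ (n - 1) * (1 / ((n : ℝ) + 1) ^ 2))) := by
        gcongr with i hi
        · exact hφ i
        · exact hterm i hi
    _ = (∑ i ∈ Icc 1 n, φ i * 64 ^ i) * (A ^ (n - 1) * (1 / ((n : ℝ) + 1) ^ 2)) := by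
        rw [sum_mul]; simp only [mul_assoc]
    _ ≤ A * (A ^ (n - 1) * (1 / ((n : ℝ) + 1) ^ 2)) := by
        gcongr
        exact (hS n).trans (le_max_right _ _)
    _ = A ^ n * (1 / ((n : ℝ) + 1) ^ 2) := by
        rw [← mul_assoc, ← pow_succ', Nat.sub_add_cancel hn]

theorem exists_eval_one_le_pow (ht : IsTSeq φ t) (hφ : ∀ i, 0 ≤ φ i)
    (hsum : Summable fun i => φ i * 64 ^ i) : ∃ A, 1 ≤ A ∧ ∀ n, (t n).eval 1 ≤ A ^ n := by
  refine ⟨_, le_max_left 1 (∑' i, φ i * 64 ^ i), fun n => ?_⟩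
  refine (ht.eval_one_le_pow_mul_one_div_sq hφ (fun N => hsum.sum_le_tsum _
    fun i _ => by positivity [hφ i]) n).trans (mul_le_of_le_one_right (by positivity) ?_)
  rw [div_le_one (by positivity)]
  nlinarith [(n.cast_nonneg : (0 : ℝ) ≤ n)]

theorem eval_errPoly (ht : IsTSeq φ t) (x : ℝ) {n : ℕ} (hn : 1 ≤ n) :
    (errPoly φ t n).eval x = ∑ i ∈ Icc 1 n, φ i *
      ∑ ns ∈ (Nat.antidiagonalTuple (i + 1) (n - i)).erase (Fin.cons (n - i) 0),
        (∏ j, (t (ns j)).eval x) * x ^ Ldeg (i + 1) ns := by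
  have hcons : ∀ i m, Fin.cons m 0 ∈ Nat.antidiagonalTuple (i + 1) m := fun i m => by
    simp [Nat.mem_antidiagonalTuple, Fin.sum_cons]
  rw [errPoly, eval_sub, ht.eval_eq x hn, eval_finsetSum, ← sum_sub_distrib]
  refine sum_congr rfl fun i _ => ?_
  have htriv : ∏ j, (t ((Fin.cons (n - i) 0 : Fin (i + 1) → ℕ) j)).eval x = (t (n - i)).eval x := by
    simp [Fin.prod_univ_succ, ht.1]
  rw [← add_sum_erase _ _ (hcons i (n - i)), Ldeg_cons_zero, htriv, eval_mul, eval_C]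
  ring

theorem eval_errPoly_le (ht : IsTSeq φ t) (hφ : ∀ i, 0 ≤ φ i) {u A M : ℝ} {N₀ n : ℕ}
    (hu0 : 0 ≤ u) (hu1 : u < 1) (hA : 1 ≤ A) (hN₀ : A * u ^ N₀ ≤ 1)
    (htA : ∀ m, (t m).eval 1 ≤ A ^ m) (hn : 1 ≤ n) (hM : ∀ k < n, (t k).eval (u ^ 4) ≤ M) :
    (errPoly φ t n).eval (u ^ 4) ≤
      M * A ^ N₀ * ∑ i ∈ Icc 1 n, φ i * (1 - u)⁻¹ ^ i * u ^ (n - i) := by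
  have hq0 : 0 ≤ u ^ 4 := by positivity
  have hq1 : u ^ 4 ≤ 1 := pow_le_one₀ hu0 hu1.le
  rw [ht.eval_errPoly _ hn, mul_sum]
  refine sum_le_sum fun i hi => ?_
  obtain ⟨hi1, hin⟩ := mem_Icc.1 hi
  calc φ i * ∑ ns ∈ (Nat.antidiagonalTuple (i + 1) (n - i)).erase (Fin.cons (n - i) 0),
        (∏ j, (t (ns j)).eval (u ^ 4)) * (u ^ 4) ^ Ldeg (i + 1) ns
      ≤ φ i * (M * A ^ N₀ * (1 - u)⁻¹ ^ i * u ^ (n - i)) := by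
        refine mul_le_mul_of_nonneg_left ?_ (hφ i)
        exact sum_erase_cons_prod_mul_pow_Ldeg_le (fun m => ht.eval_nonneg hφ m hq0)
          (fun m => (ht.eval_le_eval hφ m hq0 hq1).trans (htA m))
          (fun m hm => hM m (by omega)) hu0 hu1 hA hN₀
    _ = M * A ^ N₀ * (φ i * (1 - u)⁻¹ ^ i * u ^ (n - i)) := by ring

theorem eval_le_mul_one_add (ht : IsTSeq φ t) (hφ : ∀ i, 0 ≤ φ i)
    (hφ1 : ∀ n, ∑ i ∈ Icc 1 n, φ i ≤ 1) {u A M : ℝ} {N₀ n : ℕ}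
    (hu0 : 0 ≤ u) (hu1 : u < 1) (hA : 1 ≤ A) (hN₀ : A * u ^ N₀ ≤ 1)
    (htA : ∀ m, (t m).eval 1 ≤ A ^ m) (hn : 1 ≤ n) (hM : ∀ k < n, (t k).eval (u ^ 4) ≤ M) :
    (t n).eval (u ^ 4) ≤
      M * (1 + A ^ N₀ * ∑ i ∈ Icc 1 n, φ i * (1 - u)⁻¹ ^ i * u ^ (n - i)) := by
  have hM0 : 0 ≤ M := (ht.eval_nonneg hφ 0 (by positivity)).trans (hM 0 hn)
  have hrec : ∑ i ∈ Icc 1 n, φ i * (t (n - i)).eval (u ^ 4) ≤ M :=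
    calc ∑ i ∈ Icc 1 n, φ i * (t (n - i)).eval (u ^ 4) ≤ ∑ i ∈ Icc 1 n, φ i * M :=
          sum_le_sum fun i hi => mul_le_mul_of_nonneg_left
            (hM _ (by have := (mem_Icc.1 hi).1; omega)) (hφ i)
      _ ≤ M := by rw [← sum_mul]; exact mul_le_of_le_one_left hM0 (hφ1 n)
  have herr := ht.eval_errPoly_le hφ hu0 hu1 hA hN₀ htA hn hM
  simp only [errPoly, eval_sub, eval_finsetSum, eval_mul, eval_C] at herr
  linarith

theorem exists_eval_errPoly_le (ht : IsTSeq φ t) (hφ : ∀ i, 0 ≤ φ i)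
    (hφ1 : ∀ n, ∑ i ∈ Icc 1 n, φ i ≤ 1) {A u : ℝ} (hA : 1 ≤ A) (htA : ∀ m, (t m).eval 1 ≤ A ^ m)
    (hu0 : 0 ≤ u) (hu1 : u < 1)
    (hγ : Summable fun n => ∑ i ∈ Icc 1 n, φ i * (1 - u)⁻¹ ^ i * u ^ (n - i)) :
    ∃ K, 0 ≤ K ∧ ∀ n, 1 ≤ n → (errPoly φ t n).eval (u ^ 4) ≤
      K * ∑ i ∈ Icc 1 n, φ i * (1 - u)⁻¹ ^ i * u ^ (n - i) := by
  obtain ⟨N₀, hN₀⟩ : ∃ N₀, A * u ^ N₀ ≤ 1 := by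
    obtain ⟨N₀, h⟩ := exists_pow_lt_of_lt_one (inv_pos.2 (by linarith : 0 < A)) hu1
    refine ⟨N₀, ?_⟩
    calc A * u ^ N₀ ≤ A * A⁻¹ := by gcongr
      _ = 1 := mul_inv_cancel₀ (by linarith)
  set γ := fun n => A ^ N₀ * ∑ i ∈ Icc 1 n, φ i * (1 - u)⁻¹ ^ i * u ^ (n - i)
  have hγ0 : ∀ n, 0 ≤ γ n := fun n =>
    mul_nonneg (by positivity) (sum_nonneg fun i _ => by positivity [hφ i])
  have hbounded := le_exp_tsum_of_le_mul_one_add hγ0 (hγ.mul_left _) (by simp [ht.1])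
    fun n hn M hM => ht.eval_le_mul_one_add hφ hφ1 hu0 hu1 hA hN₀ htA hn hM
  refine ⟨Real.exp (∑' n, γ n) * A ^ N₀, by positivity, fun n hn => ?_⟩
  simpa [mul_assoc] using ht.eval_errPoly_le hφ hu0 hu1 hA hN₀ htA hn fun k _ => hbounded k

end IsTSeq

theorem stmt17_general (φ : ℕ → ℝ) (t : ℕ → Polynomial ℝ)
    (hφ0 : φ 0 = 0) (ht : IsTSeq φ t)
    (hnonneg : ∀ n, 1 ≤ n → 0 ≤ φ n)
    (hsum : HasSum φ 1)
    (hdecay : ∃ c : ℝ, c < -2 ∧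
      ∀ᶠ n : ℕ in atTop, φ n ≤ Real.exp (c * (n : ℝ) * Real.log (n : ℝ))) :
    ∀ q : ℝ, 0 ≤ q → q < 1 → ∃ r : ℝ, 0 ≤ r ∧ r < 1 ∧
      ∀ᶠ n : ℕ in atTop,
        (t n - ∑ i ∈ Finset.Icc 1 n, Polynomial.C (φ i) * t (n - i)).eval q ≤ r ^ n := by
  intro q hq0 hq1
  have hφ : ∀ i, 0 ≤ φ i := fun i => i.eq_zero_or_pos.elim (fun h => h ▸ hφ0.ge) (hnonneg i)
  obtain ⟨c, hc, hφc⟩ := hdecay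
  have hgeom : ∀ R β : ℝ, 0 < R → 0 < β → ∀ᶠ n : ℕ in atTop, φ n * R ^ n ≤ β ^ n :=
    fun R β hR hβ => eventually_mul_pow_le_pow_of_le_exp (by linarith) hφc hR hβ
  obtain ⟨A, hA, htA⟩ := ht.exists_eval_one_le_pow hφ <| summable_of_eventually_le_half_pow
    (fun i => by positivity [hφ i]) (hgeom 64 _ (by norm_num) (by norm_num))
  obtain ⟨u, hu0, hu1, rfl⟩ := exists_pow_eq_of_lt_one hq0 hq1 four_ne_zero
  set ρ := (1 + u) / 2
  have hρ1 : ρ < 1 := by simp only [ρ]; linarith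
  obtain ⟨D, hD⟩ := exists_le_mul_pow_of_eventually_le (ρ := ρ) (by positivity)
    (fun i => by positivity [hφ i]) (hgeom (1 - u)⁻¹ _ (inv_pos.2 (by linarith)) (by positivity))
  have hγ := sum_Icc_mul_pow_sub_le hu0 (by simp only [ρ]; linarith)
    (fun i => by positivity [hφ i]) hD
  obtain ⟨K, hK0, hK⟩ := ht.exists_eval_errPoly_le hφ
    (fun n => sum_le_hasSum _ (fun i _ => hφ i) hsum) hA htA hu0 hu1
    (summable_of_le_mul_self_mul_pow (fun n => sum_nonneg fun i _ => by positivity [hφ i])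
      (by positivity) hρ1 hγ)
  refine exists_eventually_le_pow_of_le_mul_pow (K := K * D) (by positivity) hρ1
    (eventually_atTop.2 ⟨1, fun n hn => ?_⟩)
  calc (errPoly φ t n).eval (u ^ 4)
      ≤ K * ∑ i ∈ Icc 1 n, φ i * (1 - u)⁻¹ ^ i * u ^ (n - i) := hK n hn
    _ ≤ K * D * (n * ρ ^ n) := by rw [mul_assoc]; exact mul_le_mul_of_nonneg_left (hγ n) hK0

/-- assume `φ_n ≥ 0` with `∑ φ_n = 1` (so `ζ = 1`), superexponential
decay `limsup (log φ_n)/(n log n) < −2` (expressed as: eventually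
`φ_n ≤ exp(c n log n)` for some `c < −2`), and `θ(z) = (1 − φ(z))/(1 − z)` extends to
an entire function with no zeros in `|z| ≤ 1`.  Then for every `q ∈ [0,1)` there is
`r ∈ [0,1)` with `ε_n(q) ≤ r^n` for all large `n`, where
`ε_n = t_n − ∑_{i=1}^n φ_i t_{n−i}`. -/
theorem stmt17 (φ : ℕ → ℝ) (t : ℕ → Polynomial ℝ) (θ : ℂ → ℂ)
    (hφ0 : φ 0 = 0) (ht : IsTSeq φ t)
    (hnonneg : ∀ n, 1 ≤ n → 0 ≤ φ n)
    (hsum : HasSum φ 1)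
    (hdecay : ∃ c : ℝ, c < -2 ∧
      ∀ᶠ n : ℕ in atTop, φ n ≤ Real.exp (c * (n : ℝ) * Real.log (n : ℝ)))
    (hθdiff : Differentiable ℂ θ)
    (hθeq : ∀ z : ℂ, (1 - z) * θ z = 1 - ∑' i : ℕ, (φ i : ℂ) * z ^ i)
    (hθne : ∀ z : ℂ, ‖z‖ ≤ 1 → θ z ≠ 0) :
    ∀ q : ℝ, 0 ≤ q → q < 1 → ∃ r : ℝ, 0 ≤ r ∧ r < 1 ∧
      ∀ᶠ n : ℕ in atTop,
        (t n - ∑ i ∈ Finset.Icc 1 n, Polynomial.C (φ i) * t (n - i)).eval q ≤ r ^ n :=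
  stmt17_general φ t hφ0 ht hnonneg hsum hdecay
end
end
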